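/- With Δ(n,k,n',k') as defined via the supports of the modified Littlewood–Paley partition (Δ = log₂⁺(2^{−n'/2}·d(supp χ̃_{n,k}, supp χ_{n',k'}))), for each s > 1 there exists a constant C(s) > 0 such that Σ_{(n',k')} 2^{−s·Δ(n,k,n',k')} < C(s) uniformly in (n,k), and symmetrically Σ_{(n,k)} 2^{−s·Δ(n,k,n',k')} < C(s) uniformly in (n',k'). Here the sums range over all indices (n,k) ∈ ℤ_{≥0} × ℤ for which χ_{n,k} is not identically zero. -/
import Mathlib


/-- Distance between two subsets of ℝ. -/
noncomputable def setDist (A B : Set ℝ) : ℝ := sInf (Set.image2 dist A B)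


lemma u_pos (n : ℕ) : (0:ℝ) < (2:ℝ)^((n:ℝ)/2) := Real.rpow_pos_of_pos two_pos _

lemma u_ge_one (n : ℕ) : (1:ℝ) ≤ (2:ℝ)^((n:ℝ)/2) :=
  Real.one_le_rpow one_le_two (by positivity)

lemma u_sq (n : ℕ) : (2:ℝ)^((n:ℝ)/2) * (2:ℝ)^((n:ℝ)/2) = (2:ℝ)^(n:ℝ) := by
  rw [← Real.rpow_add two_pos]; congr 1; ring

lemma u_inv (n : ℕ) : (2:ℝ)^((n:ℝ)/2) * (2:ℝ)^(-(n:ℝ)/2) = 1 := by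
  rw [← Real.rpow_add two_pos, show (n:ℝ)/2 + -(n:ℝ)/2 = 0 by ring, Real.rpow_zero]

lemma tau_mul (n n' : ℕ) :
    (2:ℝ)^(((n:ℝ)-(n':ℝ))/2) * (2:ℝ)^((n':ℝ)/2) = (2:ℝ)^((n:ℝ)/2) := by
  rw [← Real.rpow_add two_pos]; congr 1; ring

lemma rpow_e_mono {a b : ℝ} (h : a ≤ b) : (2:ℝ)^a ≤ (2:ℝ)^b :=
  Real.rpow_le_rpow_of_exponent_le one_le_two h

lemma two_rpow_nat (m : ℕ) : (2:ℝ)^((m:ℕ):ℝ) = (2:ℝ)^(m:ℕ) := Real.rpow_natCast 2 m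

lemma two_rpow_72 : (11:ℝ) ≤ (2:ℝ)^((7:ℝ)/2) := by
  set a := (2:ℝ)^((7:ℝ)/2) with ha
  have h0 : 0 < a := Real.rpow_pos_of_pos two_pos _
  have h1 : a * a = 128 := by
    rw [ha, ← Real.rpow_add two_pos]
    rw [show (7:ℝ)/2 + (7:ℝ)/2 = ((7:ℕ):ℝ) by norm_num, two_rpow_nat]
    norm_num
  nlinarith

lemma two_rpow_two : (2:ℝ)^((4:ℝ)/2) = 4 := by
  rw [show (4:ℝ)/2 = ((2:ℕ):ℝ) by norm_num, two_rpow_nat]; norm_num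

lemma two_rpow_three : (2:ℝ)^((6:ℝ)/2) = 8 := by
  rw [show (6:ℝ)/2 = ((3:ℕ):ℝ) by norm_num, two_rpow_nat]; norm_num

lemma two_rpow_neg32 : (1/3:ℝ) ≤ (2:ℝ)^(-(3:ℝ)/2) := by
  have hb0 : (0:ℝ) < (2:ℝ)^((3:ℝ)/2) := Real.rpow_pos_of_pos two_pos _
  have h1 : (2:ℝ)^((3:ℝ)/2) * (2:ℝ)^((3:ℝ)/2) = 8 := by
    rw [← Real.rpow_add two_pos]
    rw [show (3:ℝ)/2 + (3:ℝ)/2 = ((3:ℕ):ℝ) by norm_num, two_rpow_nat]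
    norm_num
  have hb3 : (2:ℝ)^((3:ℝ)/2) ≤ 3 := by nlinarith
  have h2 : (2:ℝ)^(-(3:ℝ)/2) = ((2:ℝ)^((3:ℝ)/2))⁻¹ := by
    rw [show -(3:ℝ)/2 = -((3:ℝ)/2) by ring, Real.rpow_neg two_pos.le]
  rw [h2, ← one_div]
  exact one_div_le_one_div_of_le hb0 hb3

lemma setDist_lb {A B : Set ℝ} (hA : A.Nonempty) (hB : B.Nonempty) {d : ℝ}
    (h : ∀ a ∈ A, ∀ b ∈ B, d ≤ dist a b) : d ≤ setDist A B := by
  apply le_csInf (hA.image2 hB)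
  rintro x hx
  rw [Set.mem_image2] at hx
  obtain ⟨a, ha, b, hb, rfl⟩ := hx
  exact h a ha b hb

lemma key_E {n' : ℕ} {A B : Set ℝ} (hA : A.Nonempty) (hB : B.Nonempty) {c : ℝ}
    (h : ∀ a ∈ A, ∀ b ∈ B, (2:ℝ)^((n':ℝ)/2) * c ≤ |a - b|) :
    c ≤ (2:ℝ)^(-(n':ℝ)/2) * setDist A B := by
  have h1 : (2:ℝ)^((n':ℝ)/2) * c ≤ setDist A B :=
    setDist_lb hA hB (fun a ha b hb => by rw [Real.dist_eq]; exact h a ha b hb)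
  have h2 : (2:ℝ)^(-(n':ℝ)/2) * ((2:ℝ)^((n':ℝ)/2) * c) = c := by
    rw [← mul_assoc, mul_comm ((2:ℝ)^(-(n':ℝ)/2)), u_inv, one_mul]
  have h3 := mul_le_mul_of_nonneg_left h1 (le_of_lt (Real.rpow_pos_of_pos two_pos (-(n':ℝ)/2)))
  rw [h2] at h3
  exact h3

section SupportLemmas

variable {χ ρ : ℝ → ℝ} {X : ℕ → ℝ → ℝ} {chiNK tchiNK : ℕ → ℤ → ℝ → ℝ}
variable (hχone : ∀ s : ℝ, s ≤ 4/3 → χ s = 1) (hχzero : ∀ s : ℝ, 5/3 ≤ s → χ s = 0)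
variable (hρ : ∀ s, ρ s = χ (s+1) - χ (s+2))
variable (hX0 : ∀ s, X 0 s = χ |s|)
variable (hXn : ∀ n : ℕ, 1 ≤ n → ∀ s,
      X n s = χ ((2:ℝ)^(-(n:ℝ)) * |s|) - χ ((2:ℝ)^(-(n:ℝ)+1) * |s|))
variable (hchiNK : ∀ n k ξ, chiNK n k ξ = ρ ((2:ℝ)^(-(n:ℝ)/2) * ξ - k) * X n ξ)
variable (htchiNK : ∀ n k ξ, tchiNK n k ξ =
      ρ ((2:ℝ)^(-(n:ℝ)/2) * ξ - ((k:ℝ) - 1)) + ρ ((2:ℝ)^(-(n:ℝ)/2) * ξ - k)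
        + ρ ((2:ℝ)^(-(n:ℝ)/2) * ξ - ((k:ℝ) + 1)))

include hχone hχzero hρ in
lemma rho_supp {t : ℝ} (h : ρ t ≠ 0) : |t| ≤ 2/3 := by
  by_contra hc
  push_neg at hc
  apply h
  rw [hρ]
  rcases lt_abs.mp hc with h1 | h1
  · rw [hχzero _ (by linarith), hχzero _ (by linarith)]; ring
  · rw [hχone _ (by linarith), hχone _ (by linarith)]; ring

include hχone hχzero hX0 hXn in
lemma X_rad {n : ℕ} {ξ : ℝ} (h : X n ξ ≠ 0) :
    |ξ| ≤ 5/3 * (2:ℝ)^(n:ℝ) ∧ (1 ≤ n → 2/3 * (2:ℝ)^(n:ℝ) ≤ |ξ|) := by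
  rcases Nat.eq_zero_or_pos n with rfl | hn
  · rw [hX0] at h
    constructor
    · by_contra hc
      push_neg at hc
      rw [Nat.cast_zero, Real.rpow_zero] at hc
      exact h (hχzero _ (by linarith))
    · intro h1; omega
  · have hn1 : 1 ≤ n := hn
    rw [hXn n hn1 ξ] at h
    have hb : (0:ℝ) < (2:ℝ)^((n:ℝ)) := by positivity
    have ha : (0:ℝ) < (2:ℝ)^(-(n:ℝ)) := by positivity
    have hab : (2:ℝ)^(-(n:ℝ)) * (2:ℝ)^((n:ℝ)) = 1 := by
      rw [← Real.rpow_add two_pos]; norm_num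
    have hsplit : (2:ℝ)^(-(n:ℝ)+1) = 2 * (2:ℝ)^(-(n:ℝ)) := by
      rw [Real.rpow_add two_pos, Real.rpow_one]; ring
    rw [hsplit] at h
    constructor
    · by_contra hc
      push_neg at hc
      apply h
      have e1 : (5:ℝ)/3 ≤ (2:ℝ)^(-(n:ℝ)) * |ξ| := by nlinarith
      rw [hχzero _ e1, hχzero _ (by nlinarith)]
      ring
    · intro _
      by_contra hc
      push_neg at hc
      apply h
      have e1 : (2:ℝ)^(-(n:ℝ)) * |ξ| ≤ 4/3 := by nlinarith
      rw [hχone _ e1, hχone _ (by nlinarith)]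
      ring

include hχone hχzero hρ hX0 hXn hchiNK in
lemma chiNK_mem {n : ℕ} {k : ℤ} {ξ : ℝ} (h : chiNK n k ξ ≠ 0) :
    |(2:ℝ)^(-(n:ℝ)/2) * ξ - k| ≤ 2/3 ∧ |ξ| ≤ 5/3 * (2:ℝ)^(n:ℝ) ∧
      (1 ≤ n → 2/3 * (2:ℝ)^(n:ℝ) ≤ |ξ|) := by
  rw [hchiNK] at h
  obtain ⟨h1, h2⟩ := mul_ne_zero_iff.mp h
  exact ⟨rho_supp hχone hχzero hρ h1, X_rad hχone hχzero hX0 hXn h2⟩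

include hρ htchiNK in
lemma tchi_eq (n : ℕ) (k : ℤ) (ξ : ℝ) :
    tchiNK n k ξ = χ ((2:ℝ)^(-(n:ℝ)/2) * ξ - k) - χ ((2:ℝ)^(-(n:ℝ)/2) * ξ - k + 3) := by
  rw [htchiNK, hρ, hρ, hρ]
  set u := (2:ℝ)^(-(n:ℝ)/2) * ξ
  have e1 : u - ((k:ℝ) - 1) + 1 = u - k + 2 := by ring
  have e2 : u - ((k:ℝ) - 1) + 2 = u - k + 3 := by ring
  have e3 : u - ((k:ℝ) + 1) + 1 = u - k := by ring
  have e4 : u - ((k:ℝ) + 1) + 2 = u - k + 1 := by ring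
  rw [e1, e2, e3, e4]
  ring

include hχone hχzero hρ htchiNK in
lemma tchi_mem {n : ℕ} {k : ℤ} {ξ : ℝ} (h : tchiNK n k ξ ≠ 0) :
    |(2:ℝ)^(-(n:ℝ)/2) * ξ - k| ≤ 5/3 := by
  rw [tchi_eq hρ htchiNK] at h
  by_contra hc
  push_neg at hc
  apply h
  rcases lt_abs.mp hc with h1 | h1
  · rw [hχzero _ (by linarith), hχzero _ (by linarith)]; ring
  · rw [hχone _ (by linarith), hχone _ (by linarith)]; ring

include hχone hχzero hρ hchiNK htchiNK in
lemma tchi_ne {n : ℕ} {k : ℤ} {ξ : ℝ} (h : chiNK n k ξ ≠ 0) : tchiNK n k ξ ≠ 0 := by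
  rw [hchiNK] at h
  obtain ⟨h1, _⟩ := mul_ne_zero_iff.mp h
  have hv := rho_supp hχone hχzero hρ h1
  rw [abs_le] at hv
  rw [tchi_eq hρ htchiNK, hχone _ (by linarith), hχzero _ (by linarith)]
  norm_num

include hχone hχzero hρ hX0 hXn hchiNK in
lemma k_bounds {n : ℕ} {k : ℤ} (h : ∃ ξ, chiNK n k ξ ≠ 0) :
    |(k:ℝ)| ≤ 3 * (2:ℝ)^((n:ℝ)/2) ∧
      (1 ≤ n → 2/3 * (2:ℝ)^((n:ℝ)/2) - 2/3 ≤ |(k:ℝ)|) := by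
  obtain ⟨ξ, hξ⟩ := h
  obtain ⟨h1, h2, h3⟩ := chiNK_mem hχone hχzero hρ hX0 hXn hchiNK hξ
  have hc : (0:ℝ) < (2:ℝ)^(-(n:ℝ)/2) := by positivity
  have hu := u_pos n
  have hcu : (2:ℝ)^((n:ℝ)/2) * (2:ℝ)^(-(n:ℝ)/2) = 1 := u_inv n
  have hsq := u_sq n
  have habs : |(2:ℝ)^(-(n:ℝ)/2) * ξ| = (2:ℝ)^(-(n:ℝ)/2) * |ξ| := by
    rw [abs_mul, abs_of_pos hc]
  have htri1 : |(k:ℝ)| ≤ |(2:ℝ)^(-(n:ℝ)/2) * ξ| + 2/3 := by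
    have := abs_sub_abs_le_abs_sub ((k:ℝ)) ((2:ℝ)^(-(n:ℝ)/2) * ξ)
    rw [abs_sub_comm] at this
    linarith
  have htri2 : |(2:ℝ)^(-(n:ℝ)/2) * ξ| - 2/3 ≤ |(k:ℝ)| := by
    have := abs_sub_abs_le_abs_sub ((2:ℝ)^(-(n:ℝ)/2) * ξ) ((k:ℝ))
    linarith
  have hxc : (2:ℝ)^(-(n:ℝ)/2) * |ξ| ≤ 5/3 * (2:ℝ)^((n:ℝ)/2) := by
    have h5 : (2:ℝ)^(-(n:ℝ)/2) * |ξ| ≤ (2:ℝ)^(-(n:ℝ)/2) * (5/3 * (2:ℝ)^((n:ℝ))) :=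
      mul_le_mul_of_nonneg_left h2 hc.le
    calc (2:ℝ)^(-(n:ℝ)/2) * |ξ| ≤ (2:ℝ)^(-(n:ℝ)/2) * (5/3 * (2:ℝ)^((n:ℝ))) := h5
      _ = 5/3 * (2:ℝ)^((n:ℝ)/2) := by rw [← hsq]; nlinarith [hcu]
  constructor
  · rw [habs] at htri1
    nlinarith [u_ge_one n]
  · intro hn1
    have hlow := h3 hn1
    have hxl : 2/3 * (2:ℝ)^((n:ℝ)/2) ≤ (2:ℝ)^(-(n:ℝ)/2) * |ξ| := by
      have h5 : (2:ℝ)^(-(n:ℝ)/2) * (2/3 * (2:ℝ)^((n:ℝ))) ≤ (2:ℝ)^(-(n:ℝ)/2) * |ξ| :=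
        mul_le_mul_of_nonneg_left hlow hc.le
      calc 2/3 * (2:ℝ)^((n:ℝ)/2) = (2:ℝ)^(-(n:ℝ)/2) * (2/3 * (2:ℝ)^((n:ℝ))) := by
            rw [← hsq]; nlinarith [hcu]
        _ ≤ (2:ℝ)^(-(n:ℝ)/2) * |ξ| := h5
    rw [habs] at htri2
    linarith

end SupportLemmas


noncomputable def wfun (s y : ℝ) : ℝ := min 1 ((max 1 y) ^ (-s))

noncomputable def vfun (s : ℝ) (j : ℤ) : ℝ := wfun s (|(j:ℝ)|/3 - 15)

lemma wfun_nonneg (s y : ℝ) : 0 ≤ wfun s y := by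
  unfold wfun
  have : (0:ℝ) ≤ (max 1 y) ^ (-s) := Real.rpow_nonneg (le_trans zero_le_one (le_max_left _ _)) _
  exact le_min (by norm_num) this

lemma wfun_le_one (s y : ℝ) : wfun s y ≤ 1 := min_le_left _ _

lemma rpow_neg_anti {a b s : ℝ} (ha : 0 < a) (hab : a ≤ b) (hs : 0 ≤ s) :
    b ^ (-s) ≤ a ^ (-s) := by
  rw [Real.rpow_neg (ha.trans_le hab).le, Real.rpow_neg ha.le]
  exact inv_anti₀ (Real.rpow_pos_of_pos ha s) (Real.rpow_le_rpow ha.le hab hs)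

lemma wfun_anti {s y z : ℝ} (hs : 0 ≤ s) (h : y ≤ z) : wfun s z ≤ wfun s y := by
  unfold wfun
  exact min_le_min le_rfl (rpow_neg_anti (lt_of_lt_of_le one_pos (le_max_left 1 y))
    (max_le_max le_rfl h) hs)

lemma wfun_le_rpow {s y : ℝ} (hs : 0 ≤ s) (hy : 0 < y) : wfun s y ≤ y ^ (-s) := by
  rcases le_or_gt y 1 with h | h
  · exact (wfun_le_one s y).trans
      (Real.one_le_rpow_of_pos_of_le_one_of_nonpos hy h (neg_nonpos.mpr hs))
  · unfold wfun
    rw [max_eq_right h.le]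
    exact min_le_right _ _

lemma key {s x y : ℝ} (hs : 0 < s) (hxy : y ≤ x) :
    (2:ℝ) ^ (-(s * max 0 (Real.logb 2 x))) ≤ wfun s y := by
  have h1 : (1:ℝ) < 2 := one_lt_two
  have hmaxpos : (0:ℝ) < max 1 y := lt_of_lt_of_le one_pos (le_max_left 1 y)
  have hlb : Real.logb 2 (max 1 y) ≤ max 0 (Real.logb 2 x) := by
    rcases le_or_gt y 1 with h | h
    · rw [max_eq_left h, Real.logb_one]
      exact le_max_left _ _
    · rw [max_eq_right h.le]
      exact le_trans (Real.logb_le_logb_of_le h1 (lt_trans one_pos h) hxy) (le_max_right _ _)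
  apply le_min
  · apply Real.rpow_le_one_of_one_le_of_nonpos h1.le
    have h0 : 0 ≤ max 0 (Real.logb 2 x) := le_max_left _ _
    nlinarith
  · have : (2:ℝ) ^ (-(s * max 0 (Real.logb 2 x))) ≤ (2:ℝ) ^ (-(s * Real.logb 2 (max 1 y))) := by
      apply Real.rpow_le_rpow_of_exponent_le h1.le
      nlinarith
    refine this.trans (le_of_eq ?_)
    rw [show -(s * Real.logb 2 (max 1 y)) = Real.logb 2 (max 1 y) * (-s) by ring,
      Real.rpow_mul (by norm_num : (0:ℝ) ≤ 2), Real.rpow_logb (by norm_num) (by norm_num) hmaxpos]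

lemma vfun_nonneg (s : ℝ) (j : ℤ) : 0 ≤ vfun s j := wfun_nonneg _ _

lemma summable_vfun {s : ℝ} (hs : 1 < s) : Summable (vfun s) := by
  have hmaj : ∀ j : ℤ, vfun s j ≤ (96:ℝ) ^ s * (1 / |(j:ℝ) + 1/2| ^ s) := by
    intro j
    have hj0 : (0:ℝ) < |(j:ℝ) + 1/2| := by
      rw [abs_pos]
      intro h
      have h2 : (2*j : ℝ) = -1 := by linarith
      have : (2*j : ℤ) = -1 := by exact_mod_cast h2
      omega
    have hja : |(j:ℝ) + 1/2| ≤ |(j:ℝ)| + 1 := by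
      calc |(j:ℝ) + 1/2| ≤ |(j:ℝ)| + |(1/2 : ℝ)| := abs_add_le _ _
        _ ≤ |(j:ℝ)| + 1 := by
            have h : |(1/2:ℝ)| ≤ 1 := by rw [abs_of_pos] <;> norm_num
            linarith
    set y : ℝ := |(j:ℝ) + 1/2| / 96 with hy
    have hy0 : 0 < y := by positivity
    have step : vfun s j ≤ y ^ (-s) := by
      rcases le_or_gt (|(j:ℝ)|) 95 with h | h
      · refine (wfun_le_one _ _).trans ?_
        apply Real.one_le_rpow_of_pos_of_le_one_of_nonpos hy0 ?_ (by linarith)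
        rw [hy, div_le_one (by norm_num)]
        linarith
      · have h2 : y ≤ |(j:ℝ)|/3 - 15 := by
          rw [hy, div_le_iff₀ (by norm_num : (0:ℝ) < 96)]
          nlinarith [abs_nonneg (j:ℝ)]
        exact (wfun_anti (by linarith : (0:ℝ) ≤ s) h2).trans (wfun_le_rpow (by linarith) hy0)
    refine step.trans (le_of_eq ?_)
    rw [hy, Real.rpow_neg (by positivity), Real.div_rpow (abs_nonneg _) (by norm_num : (0:ℝ) ≤ 96),
      inv_div, div_eq_mul_one_div]
  exact Summable.of_nonneg_of_le (vfun_nonneg s)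
    hmaj (((Real.summable_one_div_int_add_rpow (1/2) s).mpr hs).mul_left _)

noncomputable def Sv (s : ℝ) : ℝ := ∑' j : ℤ, vfun s j

lemma Sv_nonneg (s : ℝ) : 0 ≤ Sv s := tsum_nonneg (vfun_nonneg s)

noncomputable def Cval (s : ℝ) : ℝ :=
  13 * Sv s + 7 * (4:ℝ) ^ s * (1 - (2:ℝ) ^ ((1-s)/2))⁻¹

lemma band_sum {c R : ℝ} (hc : 0 ≤ c) (hR : 0 ≤ R) :
    Summable (fun k : ℤ => if |(k:ℝ)| ≤ R then c else 0) ∧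
    ∑' k : ℤ, (if |(k:ℝ)| ≤ R then c else 0) ≤ (2*R+1)*c := by
  set f : ℤ → ℝ := fun k => if |(k:ℝ)| ≤ R then c else 0 with hf
  have hsupp : ∀ k ∉ Finset.Icc (-⌊R⌋) ⌊R⌋, f k = 0 := by
    intro k hk
    rw [Finset.mem_Icc] at hk
    rw [hf]
    simp only [ite_eq_right_iff]
    intro habs
    exfalso
    have h1 : k ≤ ⌊R⌋ := Int.le_floor.mpr ((le_abs_self _).trans habs)
    have h2 : -⌊R⌋ ≤ k := by
      have : -k ≤ ⌊R⌋ := Int.le_floor.mpr (by push_cast; exact (neg_le_abs _).trans habs)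
      omega
    exact hk ⟨h2, h1⟩
  have hsum : Summable f := summable_of_ne_finset_zero hsupp
  refine ⟨hsum, ?_⟩
  rw [tsum_eq_sum hsupp]
  have h0 : ((⌊R⌋ + 1 - -⌊R⌋).toNat : ℤ) = ⌊R⌋ + 1 - -⌊R⌋ :=
    Int.toNat_of_nonneg (by have := Int.floor_nonneg.mpr hR; omega)
  have hcard : ((Finset.Icc (-⌊R⌋) ⌊R⌋).card : ℝ) ≤ 2*R+1 := by
    have hc1 : ((Finset.Icc (-⌊R⌋) ⌊R⌋).card : ℝ) = ((⌊R⌋ + 1 - -⌊R⌋ : ℤ) : ℝ) := by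
      rw [Int.card_Icc]
      exact_mod_cast congrArg (Int.cast : ℤ → ℝ) h0
    rw [hc1]
    push_cast
    have := Int.floor_le R
    linarith
  calc ∑ k ∈ Finset.Icc (-⌊R⌋) ⌊R⌋, f k
      ≤ (Finset.Icc (-⌊R⌋) ⌊R⌋).card • c := by
        apply Finset.sum_le_card_nsmul
        intro k _
        rw [hf]
        dsimp only
        split <;> simp [hc]
    _ = ((Finset.Icc (-⌊R⌋) ⌊R⌋).card : ℝ) * c := nsmul_eq_mul _ _
    _ ≤ (2*R+1)*c := mul_le_mul_of_nonneg_right hcard hc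

lemma master {s : ℝ} (hs : 1 < s) (P : ℕ × ℤ → Prop)
    (hP : ∀ q : ℕ × ℤ, P q → |(q.2 : ℝ)| ≤ 3 * (2:ℝ) ^ ((q.1:ℝ)/2))
    (mid : ℕ → Prop) [DecidablePred mid] (N0 : ℕ)
    (hwin : ∀ j, mid j → j < N0 + 7 ∧ N0 < j + 7)
    (m : ℕ → ℤ) (F : {q : ℕ × ℤ // P q} → ℝ) (hF0 : ∀ p, 0 ≤ F p)
    (hFb : ∀ p : {q : ℕ × ℤ // P q}, F p ≤ if mid p.1.1 then vfun s (p.1.2 - m p.1.1)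
      else (4:ℝ) ^ s * (2:ℝ) ^ (-(s * (p.1.1:ℝ) / 2))) :
    Summable F ∧ ∑' p, F p ≤ Cval s := by
  classical
  set r : ℝ := (2:ℝ) ^ ((1-s)/2) with hrdef
  have hr1 : r < 1 := Real.rpow_lt_one_of_one_lt_of_neg one_lt_two (by linarith)
  have hr0 : 0 < r := Real.rpow_pos_of_pos two_pos _
  set g : ℕ × ℤ → ℝ := fun q => if mid q.1 then vfun s (q.2 - m q.1) else
    (if |(q.2:ℝ)| ≤ 3 * (2:ℝ) ^ ((q.1:ℝ)/2) then (4:ℝ)^s * (2:ℝ)^(-(s * (q.1:ℝ)/2)) else 0)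
    with hgdef
  have hg0 : ∀ q, 0 ≤ g q := by
    intro q
    rw [hgdef]
    dsimp only
    split
    · exact vfun_nonneg _ _
    · split
      · positivity
      · exact le_refl 0
  have hslice : ∀ n : ℕ, Summable (fun k : ℤ => g (n,k)) ∧
      ∑' k : ℤ, g (n,k) ≤ (if mid n then Sv s else 7 * ((4:ℝ)^s) * r ^ n) := by
    intro n
    by_cases hm : mid n
    · simp only [hgdef, hm, if_true]
      have hcomp : (fun k : ℤ => vfun s (k - m n)) = (vfun s) ∘ (Equiv.subRight (m n)) := rfl
      constructor
      · rw [hcomp]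
        exact (summable_vfun hs).comp_injective (Equiv.subRight (m n)).injective
      · exact le_of_eq (Equiv.tsum_eq (Equiv.subRight (m n)) (vfun s))
    · simp only [hgdef, hm, if_false]
      have hb := band_sum (c := (4:ℝ)^s * (2:ℝ)^(-(s*(n:ℝ)/2))) (R := 3 * (2:ℝ)^((n:ℝ)/2))
        (by positivity) (by positivity)
      refine ⟨hb.1, hb.2.trans ?_⟩
      have hu1 : (1:ℝ) ≤ (2:ℝ)^((n:ℝ)/2) := Real.one_le_rpow one_le_two (by positivity)
      have hrn : r ^ n = (2:ℝ) ^ (((1-s)/2) * (n:ℝ)) := by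
        rw [hrdef, ← Real.rpow_natCast ((2:ℝ)^((1-s)/2)) n, ← Real.rpow_mul (by norm_num)]
      have hsplit : (2:ℝ) ^ (((1-s)/2) * (n:ℝ)) = (2:ℝ)^((n:ℝ)/2) * (2:ℝ)^(-(s*(n:ℝ)/2)) := by
        rw [← Real.rpow_add two_pos]
        ring_nf
      have hpos1 : (0:ℝ) < (4:ℝ)^s := by positivity
      have hpos2 : (0:ℝ) < (2:ℝ)^(-(s*(n:ℝ)/2)) := by positivity
      rw [hrn, hsplit]
      nlinarith [mul_pos hpos1 hpos2]
  set u : ℕ → ℝ := fun n => if mid n then Sv s else 0 with hudef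
  set w : ℕ → ℝ := fun n => 7 * ((4:ℝ)^s) * r ^ n with hwdef
  have hu : Summable u := by
    apply summable_of_ne_finset_zero (s := Finset.range (N0+7))
    intro n hn
    rw [Finset.mem_range] at hn
    have : ¬ mid n := fun hmn => hn (hwin n hmn).1
    simp [hudef, this]
  have hw : Summable w := (summable_geometric_of_lt_one hr0.le hr1).mul_left _
  have hle : ∀ n : ℕ, (if mid n then Sv s else 7 * ((4:ℝ)^s) * r ^ n) ≤ u n + w n := by
    intro n
    rw [hudef, hwdef]
    dsimp only
    by_cases hm : mid n
    · rw [if_pos hm, if_pos hm]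
      have : (0:ℝ) ≤ 7 * ((4:ℝ)^s) * r ^ n := by positivity
      linarith
    · rw [if_neg hm, if_neg hm]
      linarith
  have hh : Summable (fun n : ℕ => if mid n then Sv s else 7 * ((4:ℝ)^s) * r ^ n) := by
    apply Summable.of_nonneg_of_le (fun n => ?_) hle (hu.add hw)
    by_cases hm : mid n
    · rw [if_pos hm]; exact Sv_nonneg s
    · rw [if_neg hm]; positivity
  have hT : Summable (fun n : ℕ => ∑' k : ℤ, g (n,k)) :=
    Summable.of_nonneg_of_le (fun n => tsum_nonneg (fun k => hg0 (n,k)))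
      (fun n => (hslice n).2) hh
  have hg : Summable g := by
    rw [summable_prod_of_nonneg hg0]
    exact ⟨fun n => (hslice n).1, hT⟩
  have hFg : ∀ p : {q : ℕ × ℤ // P q}, F p ≤ g p.1 := by
    intro p
    refine (hFb p).trans ?_
    rw [hgdef]
    dsimp only
    by_cases hm : mid p.1.1
    · rw [if_pos hm, if_pos hm]
    · rw [if_neg hm, if_neg hm, if_pos (hP p.1 p.2)]
  have hgsub : Summable (fun p : {q : ℕ × ℤ // P q} => g p.1) := hg.subtype (setOf P)
  have hFsum : Summable F := Summable.of_nonneg_of_le hF0 hFg hgsub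
  refine ⟨hFsum, ?_⟩
  have step1 : ∑' p, F p ≤ ∑' p : {q : ℕ × ℤ // P q}, g p.1 :=
    Summable.tsum_le_tsum hFg hFsum hgsub
  have step2 : ∑' p : {q : ℕ × ℤ // P q}, g p.1 ≤ ∑' q, g q := by
    have h1 : ∑' (x : ↑(setOf P)), g ↑x ≤ ∑' q, g q := by
      rw [tsum_subtype (setOf P) g]
      exact Summable.tsum_le_tsum (fun q => Set.indicator_le_self' (fun x _ => hg0 x) q)
        (hg.indicator _) hg
    exact h1
  have step3 : ∑' q, g q = ∑' n : ℕ, ∑' k : ℤ, g (n,k) :=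
    Summable.tsum_prod' hg (fun n => (hslice n).1)
  have step4 : ∑' n : ℕ, ∑' k : ℤ, g (n,k) ≤
      ∑' n : ℕ, (if mid n then Sv s else 7 * ((4:ℝ)^s) * r ^ n) :=
    Summable.tsum_le_tsum (fun n => (hslice n).2) hT hh
  have step5 : ∑' n : ℕ, (if mid n then Sv s else 7 * ((4:ℝ)^s) * r ^ n)
      ≤ (∑' n, u n) + ∑' n, w n := by
    refine (Summable.tsum_le_tsum hle hh (hu.add hw)).trans (le_of_eq (Summable.tsum_add hu hw))
  have hsumu : ∑' n, u n ≤ 13 * Sv s := by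
    have hsupp : ∀ n ∉ Finset.range (N0+7), u n = 0 := by
      intro n hn
      rw [Finset.mem_range] at hn
      have : ¬ mid n := fun hmn => hn (hwin n hmn).1
      simp [hudef, this]
    rw [tsum_eq_sum hsupp, hudef]
    dsimp only
    rw [← Finset.sum_filter]
    rw [Finset.sum_const]
    have hcard : ((Finset.range (N0+7)).filter mid).card ≤ 13 := by
      have hsub : (Finset.range (N0+7)).filter mid ⊆ Finset.Ico (N0-6) (N0+7) := by
        intro j hj
        rw [Finset.mem_filter, Finset.mem_range] at hj
        rw [Finset.mem_Ico]
        have := hwin j hj.2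
        omega
      refine (Finset.card_le_card hsub).trans ?_
      rw [Nat.card_Ico]
      omega
    rw [nsmul_eq_mul]
    have := Sv_nonneg s
    have hc : (((Finset.range (N0+7)).filter mid).card : ℝ) ≤ 13 := by exact_mod_cast hcard
    nlinarith
  have hsumw : ∑' n, w n = 7 * ((4:ℝ)^s) * (1-r)⁻¹ := by
    rw [hwdef]
    dsimp only
    rw [tsum_mul_left, tsum_geometric_of_lt_one hr0.le hr1]
  calc ∑' p, F p ≤ ∑' q, g q := step1.trans step2
    _ = ∑' n : ℕ, ∑' k : ℤ, g (n,k) := step3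
    _ ≤ ∑' n : ℕ, (if mid n then Sv s else 7 * ((4:ℝ)^s) * r ^ n) := step4
    _ ≤ (∑' n, u n) + ∑' n, w n := step5
    _ ≤ 13 * Sv s + 7 * ((4:ℝ)^s) * (1-r)⁻¹ := by rw [hsumw]; linarith
    _ = Cval s := by rw [Cval, hrdef]

section Bounds

variable {χ ρ : ℝ → ℝ} {X : ℕ → ℝ → ℝ} {chiNK tchiNK : ℕ → ℤ → ℝ → ℝ}
variable (hχone : ∀ s : ℝ, s ≤ 4/3 → χ s = 1) (hχzero : ∀ s : ℝ, 5/3 ≤ s → χ s = 0)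
variable (hρ : ∀ s, ρ s = χ (s+1) - χ (s+2))
variable (hX0 : ∀ s, X 0 s = χ |s|)
variable (hXn : ∀ n : ℕ, 1 ≤ n → ∀ s,
      X n s = χ ((2:ℝ)^(-(n:ℝ)) * |s|) - χ ((2:ℝ)^(-(n:ℝ)+1) * |s|))
variable (hchiNK : ∀ n k ξ, chiNK n k ξ = ρ ((2:ℝ)^(-(n:ℝ)/2) * ξ - k) * X n ξ)
variable (htchiNK : ∀ n k ξ, tchiNK n k ξ =
      ρ ((2:ℝ)^(-(n:ℝ)/2) * ξ - ((k:ℝ) - 1)) + ρ ((2:ℝ)^(-(n:ℝ)/2) * ξ - k)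
        + ρ ((2:ℝ)^(-(n:ℝ)/2) * ξ - ((k:ℝ) + 1)))

include hχone hχzero hρ hX0 hXn hchiNK htchiNK in
lemma A_facts {n : ℕ} {k : ℤ} (hnk : ∃ ξ, chiNK n k ξ ≠ 0) :
    (Function.support (tchiNK n k)).Nonempty ∧
    (∀ ξ ∈ Function.support (tchiNK n k),
      |ξ - (2:ℝ)^((n:ℝ)/2) * k| ≤ 5/3 * (2:ℝ)^((n:ℝ)/2)) ∧
    (∀ ξ ∈ Function.support (tchiNK n k),
      |ξ| ≤ 3 * ((2:ℝ)^((n:ℝ)/2) * (2:ℝ)^((n:ℝ)/2)) + 5/3 * (2:ℝ)^((n:ℝ)/2)) ∧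
    (1 ≤ n → ∀ ξ ∈ Function.support (tchiNK n k),
      2/3 * ((2:ℝ)^((n:ℝ)/2) * (2:ℝ)^((n:ℝ)/2)) - 7/3 * (2:ℝ)^((n:ℝ)/2) ≤ |ξ|) := by
  obtain ⟨ξ₀, hξ₀⟩ := hnk
  have hkb := k_bounds hχone hχzero hρ hX0 hXn hchiNK ⟨ξ₀, hξ₀⟩
  have hband : ∀ ξ ∈ Function.support (tchiNK n k),
      |ξ - (2:ℝ)^((n:ℝ)/2) * k| ≤ 5/3 * (2:ℝ)^((n:ℝ)/2) := by
    intro ξ hξ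
    have hv := tchi_mem hχone hχzero hρ htchiNK (Function.mem_support.mp hξ)
    have e : ξ - (2:ℝ)^((n:ℝ)/2)*k = (2:ℝ)^((n:ℝ)/2) * ((2:ℝ)^(-(n:ℝ)/2)*ξ - k) := by
      have hi := u_inv n
      linear_combination (-ξ) * hi
    rw [e, abs_mul, abs_of_pos (u_pos n)]
    nlinarith [u_pos n, hv]
  refine ⟨⟨ξ₀, Function.mem_support.mpr
    (tchi_ne hχone hχzero hρ hchiNK htchiNK hξ₀)⟩, hband, ?_, ?_⟩
  · intro ξ hξ
    have h1 := hband ξ hξ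
    have h2 : |(2:ℝ)^((n:ℝ)/2) * (k:ℝ)| = (2:ℝ)^((n:ℝ)/2) * |(k:ℝ)| := by
      rw [abs_mul, abs_of_pos (u_pos n)]
    have h3 : |ξ| ≤ |ξ - (2:ℝ)^((n:ℝ)/2)*k| + |(2:ℝ)^((n:ℝ)/2)*(k:ℝ)| := by
      have := abs_add_le (ξ - (2:ℝ)^((n:ℝ)/2)*k) ((2:ℝ)^((n:ℝ)/2)*(k:ℝ))
      simpa using this
    have h4 : (2:ℝ)^((n:ℝ)/2) * |(k:ℝ)| ≤ (2:ℝ)^((n:ℝ)/2) * (3 * (2:ℝ)^((n:ℝ)/2)) :=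
      mul_le_mul_of_nonneg_left hkb.1 (u_pos n).le
    rw [h2] at h3
    nlinarith
  · intro hn1 ξ hξ
    have h1 := hband ξ hξ
    have hkl := hkb.2 hn1
    have h2 : |(2:ℝ)^((n:ℝ)/2) * (k:ℝ)| = (2:ℝ)^((n:ℝ)/2) * |(k:ℝ)| := by
      rw [abs_mul, abs_of_pos (u_pos n)]
    have h3 : |(2:ℝ)^((n:ℝ)/2)*(k:ℝ)| - |ξ| ≤ |ξ - (2:ℝ)^((n:ℝ)/2)*k| := by
      have := abs_sub_abs_le_abs_sub ((2:ℝ)^((n:ℝ)/2)*(k:ℝ)) ξ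
      rw [abs_sub_comm] at this
      linarith
    have h4 : (2:ℝ)^((n:ℝ)/2) * (2/3 * (2:ℝ)^((n:ℝ)/2) - 2/3) ≤ (2:ℝ)^((n:ℝ)/2) * |(k:ℝ)| :=
      mul_le_mul_of_nonneg_left hkl (u_pos n).le
    rw [h2] at h3
    nlinarith

include hχone hχzero hρ hX0 hXn hchiNK in
lemma B_facts {n' : ℕ} {k' : ℤ} (hq : ∃ ξ, chiNK n' k' ξ ≠ 0) :
    (Function.support (chiNK n' k')).Nonempty ∧
    (∀ η ∈ Function.support (chiNK n' k'),
      |η - (2:ℝ)^((n':ℝ)/2) * k'| ≤ 2/3 * (2:ℝ)^((n':ℝ)/2)) ∧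
    (∀ η ∈ Function.support (chiNK n' k'),
      |η| ≤ 5/3 * ((2:ℝ)^((n':ℝ)/2) * (2:ℝ)^((n':ℝ)/2))) ∧
    (1 ≤ n' → ∀ η ∈ Function.support (chiNK n' k'),
      2/3 * ((2:ℝ)^((n':ℝ)/2) * (2:ℝ)^((n':ℝ)/2)) ≤ |η|) := by
  obtain ⟨η₀, hη₀⟩ := hq
  have hmem : ∀ η ∈ Function.support (chiNK n' k'),
      |(2:ℝ)^(-(n':ℝ)/2) * η - k'| ≤ 2/3 ∧ |η| ≤ 5/3 * (2:ℝ)^((n':ℝ)) ∧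
        (1 ≤ n' → 2/3 * (2:ℝ)^((n':ℝ)) ≤ |η|) := fun η hη =>
    chiNK_mem hχone hχzero hρ hX0 hXn hchiNK (Function.mem_support.mp hη)
  have hsq := u_sq n'
  refine ⟨⟨η₀, Function.mem_support.mpr hη₀⟩, ?_, ?_, ?_⟩
  · intro η hη
    have hv := (hmem η hη).1
    have e : η - (2:ℝ)^((n':ℝ)/2)*k' = (2:ℝ)^((n':ℝ)/2) * ((2:ℝ)^(-(n':ℝ)/2)*η - k') := by
      have hi := u_inv n'
      linear_combination (-η) * hi
    rw [e, abs_mul, abs_of_pos (u_pos n')]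
    nlinarith [u_pos n', hv]
  · intro η hη
    have := (hmem η hη).2.1
    rw [hsq]
    linarith
  · intro hn1 η hη
    have := (hmem η hη).2.2 hn1
    rw [hsq]
    linarith

lemma pair_sep {a b x y ra rb : ℝ} (hx : |x - a| ≤ ra) (hy : |y - b| ≤ rb) :
    |a - b| - ra - rb ≤ |x - y| := by
  have t1 : |a - b| ≤ |a - x| + |x - b| := abs_sub_le a x b
  have t2 : |x - b| ≤ |x - y| + |y - b| := abs_sub_le x y b
  rw [abs_sub_comm a x] at t1
  linarith

lemma quarter_rpow (s : ℝ) (N : ℕ) :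
    ((2:ℝ)^((N:ℝ)/2)/4)^(-s) = (4:ℝ)^s * (2:ℝ)^(-(s * (N:ℝ)/2)) := by
  have h1 : ((2:ℝ)^((N:ℝ)/2))^(-s) = (2:ℝ)^(-(s*(N:ℝ)/2)) := by
    rw [← Real.rpow_mul (by norm_num : (0:ℝ) ≤ 2)]
    congr 1; ring
  rw [Real.div_rpow (by positivity) (by norm_num : (0:ℝ) ≤ 4), h1,
    Real.rpow_neg (by norm_num : (0:ℝ) ≤ 4)]
  rw [div_inv_eq_mul, mul_comm]

lemma far_step {s : ℝ} (hs : 1 < s) {x : ℝ} (N : ℕ) (h : (2:ℝ)^((N:ℝ)/2)/4 ≤ x) :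
    (2:ℝ)^(-(s * max 0 (Real.logb 2 x))) ≤ (4:ℝ)^s * (2:ℝ)^(-(s*(N:ℝ)/2)) := by
  have h1 := key (by linarith : (0:ℝ) < s) h
  have h2 := wfun_le_rpow (by linarith : (0:ℝ) ≤ s)
    (by positivity : (0:ℝ) < (2:ℝ)^((N:ℝ)/2)/4)
  rw [← quarter_rpow s N]
  exact h1.trans h2

include hχone hχzero hρ hX0 hXn hchiNK htchiNK in
lemma bound1 {Δ : ℕ → ℤ → ℕ → ℤ → ℝ}
    (hΔ : ∀ n k n' k', Δ n k n' k' = max 0 (Real.logb 2 ((2:ℝ)^(-(n':ℝ)/2) *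
      setDist (Function.support (tchiNK n k)) (Function.support (chiNK n' k')))))
    {s : ℝ} (hs : 1 < s) {n n' : ℕ} {k k' : ℤ}
    (hnk : ∃ ξ, chiNK n k ξ ≠ 0) (hq : ∃ ξ, chiNK n' k' ξ ≠ 0) :
    (2:ℝ)^(-(s * Δ n k n' k')) ≤ if (n < n' + 7 ∧ n' < n + 4)
      then vfun s (k' - round ((2:ℝ)^(((n:ℝ)-(n':ℝ))/2) * k))
      else (4:ℝ)^s * (2:ℝ)^(-(s * (n':ℝ)/2)) := by
  obtain ⟨hAne, hAband, hArad, hArlo⟩ := A_facts hχone hχzero hρ hX0 hXn hchiNK htchiNK hnk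
  obtain ⟨hBne, hBband, hBrad, hBrlo⟩ := B_facts hχone hχzero hρ hX0 hXn hchiNK hq
  have hs0 : (0:ℝ) < s := by linarith
  have ha0 := u_pos n
  have hb0 := u_pos n'
  have ha1 := u_ge_one n
  have hb1 := u_ge_one n'
  rw [hΔ n k n' k']
  by_cases hm : (n < n' + 7 ∧ n' < n + 4)
  · rw [if_pos hm]
    set τ : ℝ := (2:ℝ)^(((n:ℝ)-(n':ℝ))/2) with hτdef
    set j : ℤ := k' - round (τ * k) with hjdef
    have hτ0 : (0:ℝ) < τ := Real.rpow_pos_of_pos two_pos _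
    have hτ8 : τ ≤ 8 := by
      have hc : ((n:ℝ) - (n':ℝ))/2 ≤ (6:ℝ)/2 := by
        have : (n:ℝ) ≤ (n':ℝ) + 6 := by exact_mod_cast Nat.lt_succ_iff.mp (by omega : n < (n' + 6) + 1)
        linarith
      exact (rpow_e_mono hc).trans_eq two_rpow_three
    have htm := tau_mul n n'
    have hy : (|(j:ℝ)|/3 - 15 : ℝ) ≤ (2:ℝ)^(-(n':ℝ)/2) *
        setDist (Function.support (tchiNK n k)) (Function.support (chiNK n' k')) := by
      apply key_E hAne hBne
      intro ξ hξ η hη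
      have h1 := hAband ξ hξ
      have h2 := hBband η hη
      have htri := pair_sep h1 h2
      have hfact : (2:ℝ)^((n:ℝ)/2)*(k:ℝ) - (2:ℝ)^((n':ℝ)/2)*(k':ℝ)
          = (2:ℝ)^((n':ℝ)/2) * (τ*(k:ℝ) - k') := by
        linear_combination (-(k:ℝ)) * htm
      have habs2 : |(2:ℝ)^((n:ℝ)/2)*(k:ℝ) - (2:ℝ)^((n':ℝ)/2)*(k':ℝ)|
          = (2:ℝ)^((n':ℝ)/2) * |τ*(k:ℝ) - k'| := by
        rw [hfact, abs_mul, abs_of_pos hb0]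
      have hround : |τ*(k:ℝ) - round (τ*(k:ℝ))| ≤ 1/2 := abs_sub_round _
      have hjle : |(j:ℝ)| ≤ |τ*(k:ℝ) - k'| + 1/2 := by
        have hj2 : (j:ℝ) = ((k':ℝ) - τ*(k:ℝ)) + (τ*(k:ℝ) - round (τ*(k:ℝ))) := by
          rw [hjdef]
          push_cast
          ring
        calc |(j:ℝ)| ≤ |(k':ℝ) - τ*(k:ℝ)| + |τ*(k:ℝ) - round (τ*(k:ℝ))| := by
              rw [hj2]; exact abs_add_le _ _
          _ ≤ |τ*(k:ℝ) - k'| + 1/2 := by rw [abs_sub_comm]; linarith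
      have hstep : (2:ℝ)^((n':ℝ)/2) * (|(j:ℝ)|/3 - 15)
          ≤ (2:ℝ)^((n':ℝ)/2) * (|τ*(k:ℝ) - k'| - 5/3*τ - 2/3) := by
        apply mul_le_mul_of_nonneg_left _ hb0.le
        nlinarith [abs_nonneg (τ*(k:ℝ) - (k':ℝ))]
      have hexp : (2:ℝ)^((n':ℝ)/2) * (|τ*(k:ℝ) - k'| - 5/3*τ - 2/3)
          = |(2:ℝ)^((n:ℝ)/2)*(k:ℝ) - (2:ℝ)^((n':ℝ)/2)*(k':ℝ)|
            - 5/3*(2:ℝ)^((n:ℝ)/2) - 2/3*(2:ℝ)^((n':ℝ)/2) := by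
        rw [habs2]
        linear_combination (-5/3) * htm
      linarith [hstep, hexp ▸ hstep, htri]
    exact key hs0 hy
  · rw [if_neg hm]
    apply far_step hs
    apply key_E hAne hBne
    rcases (by omega : n' + 7 ≤ n ∨ n + 4 ≤ n') with hc | hc
    · -- low : n' + 7 ≤ n
      have hn7 : 7 ≤ n := by omega
      have h11 : 11 * (2:ℝ)^((n':ℝ)/2) ≤ (2:ℝ)^((n:ℝ)/2) := by
        have he : (7:ℝ)/2 ≤ ((n:ℝ) - (n':ℝ))/2 := by
          have : (n':ℝ) + 7 ≤ (n:ℝ) := by exact_mod_cast hc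
          linarith
        have := mul_le_mul_of_nonneg_right
          (two_rpow_72.trans (rpow_e_mono (by linarith : (7:ℝ)/2 ≤ ((n:ℝ)-(n':ℝ))/2)))
          hb0.le
        rw [tau_mul n n'] at this
        exact this
      have h11a : (11:ℝ) ≤ (2:ℝ)^((n:ℝ)/2) := by nlinarith
      intro ξ hξ η hη
      have h1 := hArlo (by omega) ξ hξ
      have h2 := hBrad η hη
      have htri := abs_sub_abs_le_abs_sub ξ η
      set a := (2:ℝ)^((n:ℝ)/2)
      set b := (2:ℝ)^((n':ℝ)/2)
      have hp1 : 11 * a ≤ a * a := by nlinarith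
      have hp2 : 121 * (b*b) ≤ a * a := by nlinarith
      nlinarith
    · -- high : n + 4 ≤ n'
      have h4 : 4 * (2:ℝ)^((n:ℝ)/2) ≤ (2:ℝ)^((n':ℝ)/2) := by
        have he : (4:ℝ)/2 ≤ ((n':ℝ) - (n:ℝ))/2 := by
          have : (n:ℝ) + 4 ≤ (n':ℝ) := by exact_mod_cast hc
          linarith
        have := mul_le_mul_of_nonneg_right
          (two_rpow_two ▸ rpow_e_mono he) ha0.le
        rw [tau_mul n' n] at this
        exact this
      intro ξ hξ η hη
      have h1 := hArad ξ hξ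
      have h2 := hBrlo (by omega) η hη
      have htri := abs_sub_abs_le_abs_sub η ξ
      rw [abs_sub_comm η ξ] at htri
      set a := (2:ℝ)^((n:ℝ)/2)
      set b := (2:ℝ)^((n':ℝ)/2)
      have hp1 : 16 * (a*a) ≤ b * b := by nlinarith
      have hp2 : a ≤ a * a := by nlinarith
      nlinarith

lemma tau_inv (n n' : ℕ) :
    (2:ℝ)^(((n:ℝ)-(n':ℝ))/2) * (2:ℝ)^(((n':ℝ)-(n:ℝ))/2) = 1 := by
  rw [← Real.rpow_add two_pos, show ((n:ℝ)-(n':ℝ))/2 + ((n':ℝ)-(n:ℝ))/2 = 0 by ring,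
    Real.rpow_zero]

set_option maxHeartbeats 1000000 in
include hχone hχzero hρ hX0 hXn hchiNK htchiNK in
lemma bound2 {Δ : ℕ → ℤ → ℕ → ℤ → ℝ}
    (hΔ : ∀ n k n' k', Δ n k n' k' = max 0 (Real.logb 2 ((2:ℝ)^(-(n':ℝ)/2) *
      setDist (Function.support (tchiNK n k)) (Function.support (chiNK n' k')))))
    {s : ℝ} (hs : 1 < s) {n n' : ℕ} {k k' : ℤ}
    (hnk : ∃ ξ, chiNK n k ξ ≠ 0) (hq : ∃ ξ, chiNK n' k' ξ ≠ 0) :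
    (2:ℝ)^(-(s * Δ n k n' k')) ≤ if ((n < n' + 4 ∨ n < 7) ∧ n' < n + 4)
      then vfun s (k - round ((2:ℝ)^(((n':ℝ)-(n:ℝ))/2) * k'))
      else (4:ℝ)^s * (2:ℝ)^(-(s * (n:ℝ)/2)) := by
  obtain ⟨hAne, hAband, hArad, hArlo⟩ := A_facts hχone hχzero hρ hX0 hXn hchiNK htchiNK hnk
  obtain ⟨hBne, hBband, hBrad, hBrlo⟩ := B_facts hχone hχzero hρ hX0 hXn hchiNK hq
  have hs0 : (0:ℝ) < s := by linarith
  have ha0 := u_pos n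
  have hb0 := u_pos n'
  have ha1 := u_ge_one n
  have hb1 := u_ge_one n'
  rw [hΔ n k n' k']
  by_cases hm : ((n < n' + 4 ∨ n < 7) ∧ n' < n + 4)
  · rw [if_pos hm]
    set τ : ℝ := (2:ℝ)^(((n:ℝ)-(n':ℝ))/2) with hτdef
    set τ' : ℝ := (2:ℝ)^(((n':ℝ)-(n:ℝ))/2) with hτ'def
    set j : ℤ := k - round (τ' * k') with hjdef
    have hτ0 : (0:ℝ) < τ := Real.rpow_pos_of_pos two_pos _
    have hττ' : τ * τ' = 1 := tau_inv n n'
    have hτ8 : τ ≤ 8 := by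
      have hn6 : n ≤ n' + 6 := by omega
      have hc : ((n:ℝ) - (n':ℝ))/2 ≤ (6:ℝ)/2 := by
        have : (n:ℝ) ≤ (n':ℝ) + 6 := by exact_mod_cast hn6
        linarith
      exact (rpow_e_mono hc).trans_eq two_rpow_three
    have hτ3 : (1/3:ℝ) ≤ τ := by
      have hn3 : n' ≤ n + 3 := by omega
      have hc : -(3:ℝ)/2 ≤ ((n:ℝ) - (n':ℝ))/2 := by
        have : (n':ℝ) ≤ (n:ℝ) + 3 := by exact_mod_cast hn3
        linarith
      exact two_rpow_neg32.trans (rpow_e_mono hc)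
    have htm := tau_mul n n'
    have hy : (|(j:ℝ)|/3 - 15 : ℝ) ≤ (2:ℝ)^(-(n':ℝ)/2) *
        setDist (Function.support (tchiNK n k)) (Function.support (chiNK n' k')) := by
      apply key_E hAne hBne
      intro ξ hξ η hη
      have h1 := hAband ξ hξ
      have h2 := hBband η hη
      have htri := pair_sep h1 h2
      have hfact : (2:ℝ)^((n:ℝ)/2)*(k:ℝ) - (2:ℝ)^((n':ℝ)/2)*(k':ℝ)
          = (2:ℝ)^((n':ℝ)/2) * (τ*(k:ℝ) - k') := by
        linear_combination (-(k:ℝ)) * htm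
      have habs2 : |(2:ℝ)^((n:ℝ)/2)*(k:ℝ) - (2:ℝ)^((n':ℝ)/2)*(k':ℝ)|
          = (2:ℝ)^((n':ℝ)/2) * |τ*(k:ℝ) - k'| := by
        rw [hfact, abs_mul, abs_of_pos hb0]
      have hsplit : τ*(k:ℝ) - k' = τ * ((k:ℝ) - τ'*(k':ℝ)) := by
        linear_combination ((k':ℝ)) * hττ'
      have habs3 : |τ*(k:ℝ) - k'| = τ * |(k:ℝ) - τ'*(k':ℝ)| := by
        rw [hsplit, abs_mul, abs_of_pos hτ0]
      have hround : |τ'*(k':ℝ) - round (τ'*(k':ℝ))| ≤ 1/2 := abs_sub_round _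
      have hjle : |(j:ℝ)| ≤ |(k:ℝ) - τ'*(k':ℝ)| + 1/2 := by
        have hj2 : (j:ℝ) = ((k:ℝ) - τ'*(k':ℝ)) + (τ'*(k':ℝ) - round (τ'*(k':ℝ))) := by
          rw [hjdef]
          push_cast
          ring
        calc |(j:ℝ)| ≤ |(k:ℝ) - τ'*(k':ℝ)| + |τ'*(k':ℝ) - round (τ'*(k':ℝ))| := by
              rw [hj2]; exact abs_add_le _ _
          _ ≤ |(k:ℝ) - τ'*(k':ℝ)| + 1/2 := by linarith
      have hstep : (2:ℝ)^((n':ℝ)/2) * (|(j:ℝ)|/3 - 15)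
          ≤ (2:ℝ)^((n':ℝ)/2) * (|τ*(k:ℝ) - k'| - 5/3*τ - 2/3) := by
        apply mul_le_mul_of_nonneg_left _ hb0.le
        rw [habs3]
        have habs4 : (1/3) * (|(j:ℝ)| - 1/2) ≤ τ * |(k:ℝ) - τ'*(k':ℝ)| := by
          have h0 : (0:ℝ) ≤ |(k:ℝ) - τ'*(k':ℝ)| := abs_nonneg _
          nlinarith
        nlinarith
      have hexp : (2:ℝ)^((n':ℝ)/2) * (|τ*(k:ℝ) - k'| - 5/3*τ - 2/3)
          = |(2:ℝ)^((n:ℝ)/2)*(k:ℝ) - (2:ℝ)^((n':ℝ)/2)*(k':ℝ)|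
            - 5/3*(2:ℝ)^((n:ℝ)/2) - 2/3*(2:ℝ)^((n':ℝ)/2) := by
        rw [habs2]
        linear_combination (-5/3) * htm
      linarith [hstep, hexp ▸ hstep, htri]
    exact key hs0 hy
  · have hcase : (n' + 4 ≤ n ∧ 7 ≤ n) ∨ n + 4 ≤ n' := by omega
    rw [if_neg hm]
    apply far_step hs
    apply key_E hAne hBne
    rcases hcase with ⟨hc, hn7⟩ | hc
    · -- high : n' + 4 ≤ n and 7 ≤ n
      have h4 : 4 * (2:ℝ)^((n':ℝ)/2) ≤ (2:ℝ)^((n:ℝ)/2) := by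
        have he : (4:ℝ)/2 ≤ ((n:ℝ) - (n':ℝ))/2 := by
          have : (n':ℝ) + 4 ≤ (n:ℝ) := by exact_mod_cast hc
          linarith
        have := mul_le_mul_of_nonneg_right (two_rpow_two ▸ rpow_e_mono he) hb0.le
        rw [tau_mul n n'] at this
        exact this
      have h11a : (11:ℝ) ≤ (2:ℝ)^((n:ℝ)/2) := by
        refine two_rpow_72.trans (rpow_e_mono ?_)
        have : (7:ℝ) ≤ (n:ℝ) := by exact_mod_cast hn7
        linarith
      intro ξ hξ η hη
      have h1 := hArlo (by omega) ξ hξ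
      have h2 := hBrad η hη
      have htri := abs_sub_abs_le_abs_sub ξ η
      set a := (2:ℝ)^((n:ℝ)/2)
      set b := (2:ℝ)^((n':ℝ)/2)
      have hp1 : 11 * a ≤ a * a := by nlinarith
      have hp2 : 4 * (b*b) ≤ a * b := by nlinarith
      have hp3 : 4 * (a*b) ≤ a * a := by nlinarith
      linarith
    · -- low : n + 4 ≤ n'
      have h4 : 4 * (2:ℝ)^((n:ℝ)/2) ≤ (2:ℝ)^((n':ℝ)/2) := by
        have he : (4:ℝ)/2 ≤ ((n':ℝ) - (n:ℝ))/2 := by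
          have : (n:ℝ) + 4 ≤ (n':ℝ) := by exact_mod_cast hc
          linarith
        have := mul_le_mul_of_nonneg_right (two_rpow_two ▸ rpow_e_mono he) ha0.le
        rw [tau_mul n' n] at this
        exact this
      intro ξ hξ η hη
      have h1 := hArad ξ hξ
      have h2 := hBrlo (by omega) η hη
      have htri := abs_sub_abs_le_abs_sub η ξ
      rw [abs_sub_comm η ξ] at htri
      set a := (2:ℝ)^((n:ℝ)/2)
      set b := (2:ℝ)^((n':ℝ)/2)
      have hp1 : a ≤ a * a := by nlinarith
      have hp2 : 16 * (a*a) ≤ b * b := by nlinarith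
      have hp3 : 4 * (a*b) ≤ b * b := by nlinarith
      linarith

end Bounds

/- STATEMENT 7: For each s > 1, the sums Σ_{(n',k')} 2^{−s·Δ(n,k,n',k')} over the
nonvanishing indices converge and are bounded by a constant C(s) uniformly in (n,k),
and symmetrically with the roles of (n,k) and (n',k') exchanged. -/
theorem stmt7 (χ : ℝ → ℝ) (hχsmooth : ContDiff ℝ (⊤ : ℕ∞) χ)
    (hχrange : ∀ s, χ s ∈ Set.Icc (0:ℝ) 1)
    (hχone : ∀ s : ℝ, s ≤ 4/3 → χ s = 1) (hχzero : ∀ s : ℝ, 5/3 ≤ s → χ s = 0)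
    (ρ : ℝ → ℝ) (hρ : ∀ s, ρ s = χ (s+1) - χ (s+2))
    (X : ℕ → ℝ → ℝ)
    (hX0 : ∀ s, X 0 s = χ |s|)
    (hXn : ∀ n : ℕ, 1 ≤ n → ∀ s,
      X n s = χ ((2:ℝ)^(-(n:ℝ)) * |s|) - χ ((2:ℝ)^(-(n:ℝ)+1) * |s|))
    (chiNK tchiNK : ℕ → ℤ → ℝ → ℝ)
    (hchiNK : ∀ n k ξ, chiNK n k ξ = ρ ((2:ℝ)^(-(n:ℝ)/2) * ξ - k) * X n ξ)
    (htchiNK : ∀ n k ξ, tchiNK n k ξ =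
      ρ ((2:ℝ)^(-(n:ℝ)/2) * ξ - ((k:ℝ) - 1)) + ρ ((2:ℝ)^(-(n:ℝ)/2) * ξ - k)
        + ρ ((2:ℝ)^(-(n:ℝ)/2) * ξ - ((k:ℝ) + 1)))
    (Δ : ℕ → ℤ → ℕ → ℤ → ℝ)
    (hΔ : ∀ n k n' k', Δ n k n' k' = max 0 (Real.logb 2 ((2:ℝ)^(-(n':ℝ)/2) *
      setDist (Function.support (tchiNK n k)) (Function.support (chiNK n' k'))))) :
    ∀ s : ℝ, 1 < s → ∃ C > 0,
      (∀ (n : ℕ) (k : ℤ), (∃ ξ, chiNK n k ξ ≠ 0) →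
        Summable (fun p : {q : ℕ × ℤ // ∃ ξ, chiNK q.1 q.2 ξ ≠ 0} =>
          (2:ℝ) ^ (-(s * Δ n k p.1.1 p.1.2))) ∧
        ∑' p : {q : ℕ × ℤ // ∃ ξ, chiNK q.1 q.2 ξ ≠ 0},
          (2:ℝ) ^ (-(s * Δ n k p.1.1 p.1.2)) < C) ∧
      (∀ (n' : ℕ) (k' : ℤ), (∃ ξ, chiNK n' k' ξ ≠ 0) →
        Summable (fun p : {q : ℕ × ℤ // ∃ ξ, chiNK q.1 q.2 ξ ≠ 0} =>
          (2:ℝ) ^ (-(s * Δ p.1.1 p.1.2 n' k'))) ∧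
        ∑' p : {q : ℕ × ℤ // ∃ ξ, chiNK q.1 q.2 ξ ≠ 0},
          (2:ℝ) ^ (-(s * Δ p.1.1 p.1.2 n' k')) < C) := by
  intro s hs
  have hr1 : (2:ℝ)^((1-s)/2) < 1 :=
    Real.rpow_lt_one_of_one_lt_of_neg one_lt_two (by linarith)
  have hCpos : 0 < Cval s + 1 := by
    have h1 := Sv_nonneg s
    have h2 : (0:ℝ) ≤ (1 - (2:ℝ)^((1-s)/2))⁻¹ := inv_nonneg.mpr (by linarith)
    have h3 : (0:ℝ) < (4:ℝ)^s := by positivity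
    have h4 : (0:ℝ) ≤ 7 * (4:ℝ)^s * (1 - (2:ℝ)^((1-s)/2))⁻¹ := by positivity
    rw [Cval]
    linarith
  refine ⟨Cval s + 1, hCpos, ?_, ?_⟩
  · intro n k hnk
    have hres := master hs (fun q : ℕ × ℤ => ∃ ξ, chiNK q.1 q.2 ξ ≠ 0)
      (fun q hq => (k_bounds hχone hχzero hρ hX0 hXn hchiNK hq).1)
      (fun j => n < j + 7 ∧ j < n + 4) n (fun j hj => by omega)
      (fun j => round ((2:ℝ)^(((n:ℝ)-(j:ℝ))/2) * k))
      (fun p => (2:ℝ)^(-(s * Δ n k p.1.1 p.1.2)))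
      (fun p => (Real.rpow_pos_of_pos two_pos _).le)
      (fun p => bound1 hχone hχzero hρ hX0 hXn hchiNK htchiNK hΔ hs hnk p.2)
    exact ⟨hres.1, lt_of_le_of_lt hres.2 (by linarith)⟩
  · intro n' k' hq
    have hres := master hs (fun q : ℕ × ℤ => ∃ ξ, chiNK q.1 q.2 ξ ≠ 0)
      (fun q hq => (k_bounds hχone hχzero hρ hX0 hXn hchiNK hq).1)
      (fun j => (j < n' + 4 ∨ j < 7) ∧ n' < j + 4) n' (fun j hj => by omega)
      (fun j => round ((2:ℝ)^(((n':ℝ)-(j:ℝ))/2) * k'))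
      (fun p => (2:ℝ)^(-(s * Δ p.1.1 p.1.2 n' k')))
      (fun p => (Real.rpow_pos_of_pos two_pos _).le)
      (fun p => bound2 hχone hχzero hρ hX0 hXn hchiNK htchiNK hΔ hs p.2 hq)
    exact ⟨hres.1, lt_of_le_of_lt hres.2 (by linarith)⟩
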